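/- For every integer p ≥ 4, the (4p × 3p) column-clique grid is a co-comparability graph (the column-by-column ordering v_{1,1}, v_{2,1}, …, v_{4p,1}, v_{1,2}, …, v_{4p,3p} is a co-comparability ordering). Consequently, for n = 12p², there is an n-vertex co-comparability graph with mim-width at least √(n/12), so co-comparability graphs have unbounded mim-width. -/

import Mathlib

open SimpleGraph
open scoped Classical

noncomputable section

/-- The graph `K_t ⊠ S_t`: a clique of size `t` (the `inl` part), an independent set of
size `t` (the `inr` part), joined by a perfect matching. -/
def ktst (t : ℕ) : SimpleGraph (Fin t ⊕ Fin t) :=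
  SimpleGraph.fromRel (fun x y =>
    match x, y with
    | Sum.inl i, Sum.inl j => i ≠ j
    | Sum.inl i, Sum.inr j => i = j
    | _, _ => False)

/-- The graph `K_t ⊠ K_t`: two cliques of size `t` joined by a perfect matching. -/
def ktkt (t : ℕ) : SimpleGraph (Fin t ⊕ Fin t) :=
  SimpleGraph.fromRel (fun x y =>
    match x, y with
    | Sum.inl i, Sum.inl j => i ≠ j
    | Sum.inr i, Sum.inr j => i ≠ j
    | Sum.inl i, Sum.inr j => i = j
    | _, _ => False)

/-- The cycle graph on `ZMod n`. -/
def cycleG (n : ℕ) : SimpleGraph (ZMod n) :=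
  SimpleGraph.fromRel (fun x y => y = x + 1)

/-- `σ` enumerates the vertices of `G` as a co-comparability ordering. -/
def IsCoCompOrdering {V : Type} {n : ℕ} (G : SimpleGraph V) (σ : Fin n ≃ V) : Prop :=
  ∀ i j k : Fin n, i < j → j < k → G.Adj (σ i) (σ k) →
    G.Adj (σ j) (σ i) ∨ G.Adj (σ j) (σ k)

/-- `G` contains `H` as an induced subgraph. -/
def ContainsInducedIso {V W : Type} (G : SimpleGraph V) (H : SimpleGraph W) : Prop :=
  ∃ f : W → V, Function.Injective f ∧ ∀ x y, H.Adj x y ↔ G.Adj (f x) (f y)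

/-- A graph is chordal iff it has no induced cycle of length at least 4. -/
def Chordal {V : Type} (G : SimpleGraph V) : Prop :=
  ∀ n, 4 ≤ n → ¬ ContainsInducedIso G (cycleG n)

/-- `G` contains `H` as an induced minor (via an induced minor model). -/
def HasInducedMinor {V W : Type} (G : SimpleGraph V) (H : SimpleGraph W) : Prop :=
  ∃ S : W → Set V,
    (∀ w, (G.induce (S w)).Connected) ∧
    (∀ w w', w ≠ w' → Disjoint (S w) (S w')) ∧
    (∀ w w', H.Adj w w' → ∃ a ∈ S w, ∃ b ∈ S w', G.Adj a b) ∧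
    (∀ w w', w ≠ w' → ¬ H.Adj w w' → ∀ a ∈ S w, ∀ b ∈ S w', ¬ G.Adj a b)

/-- `G` contains `K_t` as a minor (branch sets). -/
def HasCliqueMinor {V : Type} (G : SimpleGraph V) (t : ℕ) : Prop :=
  ∃ S : Fin t → Set V,
    (∀ i, (G.induce (S i)).Connected) ∧
    (∀ i j, i ≠ j → Disjoint (S i) (S j)) ∧
    (∀ i j, i ≠ j → ∃ a ∈ S i, ∃ b ∈ S j, G.Adj a b)

/-- There is an induced matching of `G` of size `m` between `A` and its complement:
the `2m` matched vertices induce exactly the `m` matching edges in `G`. -/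
def IsSimMatching {V : Type} (G : SimpleGraph V) (A : Set V) (m : ℕ) : Prop :=
  ∃ a b : Fin m → V,
    Function.Injective a ∧ Function.Injective b ∧
    (∀ i, a i ∈ A) ∧ (∀ i, b i ∉ A) ∧
    (∀ i j, G.Adj (a i) (b j) ↔ i = j) ∧
    (∀ i j, ¬ G.Adj (a i) (a j)) ∧
    (∀ i j, ¬ G.Adj (b i) (b j))

/-- There is an induced matching of size `m` in the bipartite graph `G[A, V \ A]`
of edges crossing the cut. -/
def IsMimMatching {V : Type} (G : SimpleGraph V) (A : Set V) (m : ℕ) : Prop :=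
  ∃ a b : Fin m → V,
    Function.Injective a ∧ Function.Injective b ∧
    (∀ i, a i ∈ A) ∧ (∀ i, b i ∉ A) ∧
    (∀ i j, G.Adj (a i) (b j) ↔ i = j)

def simval {V : Type} (G : SimpleGraph V) (A : Set V) : ℕ :=
  sSup {m | IsSimMatching G A m}

def mimval {V : Type} (G : SimpleGraph V) (A : Set V) : ℕ :=
  sSup {m | IsMimMatching G A m}

/-- GF(2)-rank of the `A × Aᶜ` submatrix of the adjacency matrix: the dimension of the
span of the rows of that submatrix (rows extended by zero on columns of `A`). -/
def cutrk {V : Type} [Fintype V] (G : SimpleGraph V) (A : Set V) : ℕ :=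
  Module.finrank (ZMod 2) (Submodule.span (ZMod 2)
    {r : V → ZMod 2 | ∃ a ∈ A, r = fun v => if v ∉ A ∧ G.Adj a v then 1 else 0})

/-- A branch-decomposition of a graph on vertex set `V`: a finite subcubic tree together
with an injection of `V` onto its leaves. -/
structure BranchDecomp (V : Type) [Fintype V] where
  β : Type
  finβ : Fintype β
  T : SimpleGraph β
  connected : T.Connected
  acyclic : T.IsAcyclic
  subcubic : ∀ x : β, (T.neighborSet x).ncard = 1 ∨ (T.neighborSet x).ncard = 3
  L : V → β
  inj : Function.Injective L
  leaves : ∀ x : β, (T.neighborSet x).ncard = 1 ↔ ∃ v, L v = x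

/-- The side of the cut induced by the tree edge `xy`, on the side of `x`. -/
def BranchDecomp.cut {V : Type} [Fintype V] (D : BranchDecomp V) (x y : D.β) : Set V :=
  {v | (D.T.deleteEdges {s(x, y)}).Reachable (D.L v) x}

/-- The `f`-width of a graph on vertex set `V`: minimum over branch-decompositions of the
maximum of `f` over the cuts of the decomposition. -/
def fWidth {V : Type} [Fintype V] (f : Set V → ℕ) : ℕ :=
  sInf {w | ∃ D : BranchDecomp V, ∀ x y, D.T.Adj x y → f (D.cut x y) ≤ w}

def simw {V : Type} [Fintype V] (G : SimpleGraph V) : ℕ := fWidth (simval G)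
def mimw {V : Type} [Fintype V] (G : SimpleGraph V) : ℕ := fWidth (mimval G)
def rankw {V : Type} [Fintype V] (G : SimpleGraph V) : ℕ := fWidth (cutrk G)

/-- Contraction of the edge `v₁v₂`: the vertex `v₂` is removed and `v₁` plays the role of
the contracted vertex `z`, adjacent to all former neighbors of `v₁` or `v₂`. -/
def contractE {V : Type} (G : SimpleGraph V) (v1 v2 : V) : SimpleGraph {v : V // v ≠ v2} :=
  SimpleGraph.fromRel (fun x y =>
    G.Adj x y ∨ ((x : V) = v1 ∧ G.Adj v2 y) ∨ ((y : V) = v1 ∧ G.Adj (x : V) v2))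

/-- The `(p × q)` column-clique grid. -/
def ccGrid (p q : ℕ) : SimpleGraph (Fin p × Fin q) :=
  SimpleGraph.fromRel (fun u v =>
    (u.2 = v.2) ∨ (u.1 = v.1 ∧ ((u.2 : ℕ) + 1 = v.2 ∨ (v.2 : ℕ) + 1 = u.2)))

/-- The `(p × q)` Hsu-clique chain graph. -/
def hsu (p q : ℕ) : SimpleGraph (Fin p × Fin q) :=
  SimpleGraph.fromRel (fun u v =>
    (u.2 = v.2) ∨ ((u.2 : ℕ) + 1 = v.2 ∧ u.1 ≤ v.1))

/-- The `(k × k)` grid graph. -/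
def gridG (k : ℕ) : SimpleGraph (Fin k × Fin k) :=
  SimpleGraph.fromRel (fun u v =>
    (u.1 = v.1 ∧ (u.2 : ℕ) + 1 = v.2) ∨ (u.2 = v.2 ∧ (u.1 : ℕ) + 1 = v.1))

/-- A tree-decomposition of `G`. -/
structure TreeDecomp (V : Type) (G : SimpleGraph V) where
  β : Type
  finβ : Fintype β
  T : SimpleGraph β
  connected : T.Connected
  acyclic : T.IsAcyclic
  B : β → Set V
  coverV : ∀ v : V, ∃ t, v ∈ B t
  coverE : ∀ u v, G.Adj u v → ∃ t, u ∈ B t ∧ v ∈ B t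
  coherent : ∀ v : V, (T.induce {t | v ∈ B t}).Connected

/-- Tree-width. -/
def tw {V : Type} (G : SimpleGraph V) : ℕ :=
  sInf {k | ∃ D : TreeDecomp V G, ∀ t, (D.B t).ncard ≤ k + 1}

/-- `G` is `d`-degenerate: every (induced) subgraph has a vertex of degree at most `d`. -/
def Degenerate {V : Type} (G : SimpleGraph V) (d : ℕ) : Prop :=
  ∀ S : Set V, S.Nonempty → ∃ v ∈ S, {u ∈ S | G.Adj v u}.ncard ≤ d

/-- Every graph on `N` vertices contains a clique of size `k` or an independent set of
size `l`. -/
def ramseyProp (N k l : ℕ) : Prop :=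
  ∀ G : SimpleGraph (Fin N),
    (∃ s : Finset (Fin N), G.IsNClique k s) ∨ (∃ s : Finset (Fin N), Gᶜ.IsNClique l s)

/-- The Ramsey number `R(k, l)`. -/
def ramsey (k l : ℕ) : ℕ := sInf {N | ramseyProp N k l}

/-- `G` is a circle graph: the intersection graph of chords of a circle, equivalently the
overlap graph of a family of intervals with pairwise distinct endpoints. -/
def IsCircleGraph {V : Type} (G : SimpleGraph V) : Prop :=
  ∃ a b : V → ℝ, (∀ v, a v < b v) ∧
    (∀ v w : V, v ≠ w → a v ≠ a w ∧ a v ≠ b w ∧ b v ≠ a w ∧ b v ≠ b w) ∧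
    (∀ v w, G.Adj v w ↔
      (a v < a w ∧ a w < b v ∧ b v < b w) ∨ (a w < a v ∧ a v < b w ∧ b w < b v))

/-- Vertex set of the split graph witnessing unbounded mim-width: a clique `Fin m`
together with one independent vertex for each nonempty subset of the clique. -/
abbrev splitV (m : ℕ) := Fin m ⊕ {S : Finset (Fin m) // S.Nonempty}

/-- The split graph with clique of size `m` and an independent set of size `2^m - 1`
whose vertices have pairwise distinct nonempty neighborhoods in the clique. -/
def splitG (m : ℕ) : SimpleGraph (splitV m) :=
  SimpleGraph.fromRel (fun x y =>
    match x, y with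
    | Sum.inl i, Sum.inl j => i ≠ j
    | Sum.inl i, Sum.inr S => i ∈ S.1
    | _, _ => False)

end

/-!
Listing the grid column by column is a co-comparability order: an edge `u_i u_k` lies in one
column or joins two consecutive ones, and every vertex listed between `u_i` and `u_k` lies in
the column of `u_i` or of `u_k`, which is a clique.

For the mim-width, every branch decomposition of the `12p²`-vertex grid has an edge whose cut
`A` has at least `4p²` vertices on each side (walk through the subcubic tree towards the larger
side). If `2p - 1` columns meet both `A` and its complement, `p` of them have equal parity, and
one crossing edge inside each of these columns gives an induced matching. Otherwise some column
lies entirely on one side, and counting shows that `2p` rows meet both sides; each row contains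
a crossing edge `(i, s)(i, s ± 1)`, and the `p` of them with `s` of equal parity form an induced
matching.
-/

namespace ccGrid

variable {P Q : ℕ}

lemma adj_iff {u v : Fin P × Fin Q} :
    (ccGrid P Q).Adj u v ↔ u ≠ v ∧ (u.2 = v.2 ∨
      u.1 = v.1 ∧ ((u.2 : ℕ) + 1 = v.2 ∨ (v.2 : ℕ) + 1 = u.2)) := by
  simp only [ccGrid, fromRel_adj]
  grind

theorem isCoCompOrdering_of_monotone {n : ℕ} (σ : Fin n ≃ Fin P × Fin Q)
    (hσ : Monotone fun i => (σ i).2) : IsCoCompOrdering (ccGrid P Q) σ := by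
  intro i j k hij hjk hik
  have h₁ : ((σ i).2 : ℕ) ≤ (σ j).2 := hσ hij.le
  have h₂ : ((σ j).2 : ℕ) ≤ (σ k).2 := hσ hjk.le
  rw [adj_iff, Fin.ext_iff] at hik
  by_cases hcol : (σ j).2 = (σ i).2
  · exact .inl (adj_iff.2 ⟨σ.injective.ne hij.ne', .inl hcol⟩)
  · refine .inr (adj_iff.2 ⟨σ.injective.ne hjk.ne, .inl (Fin.ext ?_)⟩)
    rw [Fin.ext_iff] at hcol
    omega

theorem exists_isCoCompOrdering {n : ℕ} (h : n = P * Q) :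
    ∃ σ : Fin n ≃ Fin P × Fin Q, IsCoCompOrdering (ccGrid P Q) σ := by
  refine ⟨(finCongr (h.trans (mul_comm P Q))).trans
    (finProdFinEquiv.symm.trans (Equiv.prodComm _ _)), isCoCompOrdering_of_monotone _ ?_⟩
  intro i j hij
  simp only [Equiv.trans_apply, Equiv.prodComm_apply, finProdFinEquiv_symm_apply, Prod.snd_swap,
    Fin.le_def, Fin.coe_divNat, finCongr_apply, Fin.val_cast]
  exact Nat.div_le_div_right hij

end ccGrid

section MimMatching
variable {V : Type} {G : SimpleGraph V} {A : Set V} {k : ℕ}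

lemma IsMimMatching.compl (h : IsMimMatching G A k) : IsMimMatching G Aᶜ k := by
  obtain ⟨a, b, ha, hb, hA, hB, hab⟩ := h
  exact ⟨b, a, hb, ha, hB, fun i => not_not.2 (hA i), fun i j => by rw [G.adj_comm, hab, eq_comm]⟩

lemma isMimMatching_of_finset {ι : Type} (s : Finset ι) (hs : k ≤ s.card) (a b : ι → V)
    (ha : ∀ i ∈ s, a i ∈ A) (hb : ∀ i ∈ s, b i ∉ A)
    (hab : ∀ i ∈ s, ∀ j ∈ s, G.Adj (a i) (b j) ↔ i = j) : IsMimMatching G A k := by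
  let f : Fin k → ι := fun i => s.equivFin.symm (Fin.castLE hs i)
  have hf : ∀ i, f i ∈ s := fun i => (s.equivFin.symm _).2
  have hf_inj : Function.Injective f :=
    Subtype.val_injective.comp (s.equivFin.symm.injective.comp (Fin.castLE_injective hs))
  have hab' : ∀ i j, G.Adj (a (f i)) (b (f j)) ↔ i = j := fun i j => by
    rw [hab _ (hf i) _ (hf j), hf_inj.eq_iff]
  refine ⟨a ∘ f, b ∘ f, fun i j h => ?_, fun i j h => ?_,
    fun i => ha _ (hf i), fun i => hb _ (hf i), hab'⟩
  · have h : a (f i) = a (f j) := h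
    exact (hab' i j).1 (h ▸ (hab' j j).2 rfl)
  · have h : b (f i) = b (f j) := h
    exact (hab' i j).1 (h ▸ (hab' i i).2 rfl)

end MimMatching

lemma Finset.exists_le_card_filter_mod_two {ι : Type} (s : Finset ι) (f : ι → ℕ) {k : ℕ}
    (hs : 2 * k ≤ s.card + 1) : ∃ ε, k ≤ (s.filter fun i => f i % 2 = ε).card := by
  have hsplit := s.card_filter_add_card_filter_not (fun i => f i % 2 = 0)
  have hodd : s.filter (fun i => ¬ f i % 2 = 0) = s.filter (fun i => f i % 2 = 1) :=
    Finset.filter_congr fun i _ => by omega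
  rw [hodd] at hsplit
  by_cases h : k ≤ (s.filter fun i => f i % 2 = 0).card
  · exact ⟨0, h⟩
  · exact ⟨1, by omega⟩

lemma Nat.exists_crossing {p : ℕ → Prop} {u w : ℕ} (hu : p u) (hw : ¬ p w) (huw : u ≤ w) :
    ∃ s, u ≤ s ∧ s < w ∧ p s ∧ ¬ p (s + 1) := by
  induction w, huw using Nat.le_induction with
  | base => exact absurd hu hw
  | succ w huw ih =>
    by_cases h : p w
    · exact ⟨w, huw, w.lt_succ_self, h, hw⟩
    · obtain ⟨s, hus, hsw, hs⟩ := ih h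
      exact ⟨s, hus, hsw.trans w.lt_succ_self, hs⟩

lemma Fin.exists_adjacent_crossing {Q : ℕ} (f : Fin Q → Prop) {u w : Fin Q} (hu : f u)
    (hw : ¬ f w) : ∃ s t : Fin Q, ((s : ℕ) + 1 = t ∨ (t : ℕ) + 1 = s) ∧ f s ∧ ¬ f t := by
  wlog huw : u ≤ w generalizing f u w
  · obtain ⟨s, t, hst, hs, ht⟩ := this (fun c => ¬ f c) hw (not_not.2 hu) (le_of_not_ge huw)
    exact ⟨t, s, hst.symm, not_not.1 ht, hs⟩
  obtain ⟨s, -, hsw, ⟨hsQ, hs⟩, hs'⟩ := Nat.exists_crossing (p := fun m => ∃ h : m < Q, f ⟨m, h⟩)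
    ⟨u.2, hu⟩ (fun ⟨_, h⟩ => hw h) huw
  have hs1 : s + 1 < Q := by omega
  exact ⟨⟨s, hsQ⟩, ⟨s + 1, hs1⟩, .inl rfl, hs, fun h => hs' ⟨hs1, h⟩⟩

namespace ccGrid
variable {P Q k : ℕ} (A : Set (Fin P × Fin Q))

lemma isMimMatching_of_mixed_rows (R : Finset (Fin P)) (hR : 2 * k ≤ R.card)
    (hmix : ∀ i ∈ R, (∃ c, (i, c) ∈ A) ∧ ∃ c, (i, c) ∉ A) : IsMimMatching (ccGrid P Q) A k := by
  have hcross : ∀ i : R, ∃ s t : Fin Q,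
      ((s : ℕ) + 1 = t ∨ (t : ℕ) + 1 = s) ∧ (i.1, s) ∈ A ∧ (i.1, t) ∉ A := fun i =>
    have ⟨⟨_, hu⟩, ⟨_, hw⟩⟩ := hmix i i.2
    Fin.exists_adjacent_crossing (fun c => (i.1, c) ∈ A) hu hw
  choose s t hst hs ht using hcross
  -- Crossings starting in columns of equal parity cannot interfere.
  obtain ⟨ε, hε⟩ := (Finset.univ : Finset R).exists_le_card_filter_mod_two (fun i => (s i : ℕ))
    (k := k) (by rw [Finset.card_univ, Fintype.card_coe]; omega)
  refine isMimMatching_of_finset _ hε (fun i => (i.1, s i)) (fun i => (i.1, t i))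
    (fun i _ => hs i) (fun i _ => ht i) fun i hi j hj => ?_
  simp only [Finset.mem_filter, Finset.mem_univ, true_and] at hi hj
  have hsti := hst i
  have hstj := hst j
  rw [adj_iff]
  dsimp only
  constructor
  · rintro ⟨-, h | ⟨h, -⟩⟩
    · have := Fin.val_eq_of_eq h
      omega
    · exact Subtype.ext h
  · rintro rfl
    refine ⟨fun h => ?_, .inr ⟨rfl, hsti⟩⟩
    simp only [Prod.mk.injEq, true_and, Fin.ext_iff] at h
    omega

lemma isMimMatching_of_mixed_cols (M : Finset (Fin Q)) (hM : 2 * k ≤ M.card + 1)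
    (hmix : ∀ c ∈ M, (∃ r, (r, c) ∈ A) ∧ ∃ r, (r, c) ∉ A) : IsMimMatching (ccGrid P Q) A k := by
  have hrows : ∀ c : M, ∃ r r' : Fin P, (r, c.1) ∈ A ∧ (r', c.1) ∉ A := fun c =>
    have ⟨⟨r, hr⟩, ⟨r', hr'⟩⟩ := hmix c c.2
    ⟨r, r', hr, hr'⟩
  choose r r' hr hr' using hrows
  -- Distinct columns of equal parity are not adjacent.
  obtain ⟨ε, hε⟩ := (Finset.univ : Finset M).exists_le_card_filter_mod_two (fun c => (c.1 : ℕ))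
    (k := k) (by rw [Finset.card_univ, Fintype.card_coe]; omega)
  refine isMimMatching_of_finset _ hε (fun c => (r c, c.1)) (fun c => (r' c, c.1))
    (fun c _ => hr c) (fun c _ => hr' c) fun c hc d hd => ?_
  simp only [Finset.mem_filter, Finset.mem_univ, true_and] at hc hd
  rw [adj_iff]
  dsimp only
  constructor
  · rintro ⟨-, h | ⟨-, h⟩⟩
    · exact Subtype.ext h
    · omega
  · rintro rfl
    exact ⟨fun h => hr' c (h ▸ hr c), .inl rfl⟩

noncomputable def mixedCols : Finset (Fin Q) := {c | (∃ r, (r, c) ∈ A) ∧ ∃ r, (r, c) ∉ A}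

variable {A}

lemma mem_mixedCols {c : Fin Q} : c ∈ mixedCols A ↔ (∃ r, (r, c) ∈ A) ∧ ∃ r, (r, c) ∉ A := by
  simp [mixedCols]

@[simp]
lemma mixedCols_compl : mixedCols Aᶜ = mixedCols A := by
  ext c
  simp only [mem_mixedCols, Set.mem_compl_iff, not_not]
  exact and_comm

lemma isMimMatching_of_forall_col_meets (hQ : 2 * k ≤ Q + 1) (hAc : (2 * k) ^ 2 ≤ Aᶜ.ncard)
    (hmeet : ∀ c, ∃ r, (r, c) ∈ A) (hM : (mixedCols A).card + 1 < 2 * k) :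
    IsMimMatching (ccGrid P Q) A k := by
  obtain ⟨c₀, hc₀⟩ : ∃ c₀, c₀ ∉ mixedCols A := by
    by_contra! h
    have := Finset.card_le_card (fun c _ => h c : Finset.univ ⊆ mixedCols A)
    rw [Finset.card_univ, Fintype.card_fin] at this
    omega
  have hpure : ∀ r, (r, c₀) ∈ A := by
    by_contra! h
    exact hc₀ (mem_mixedCols.2 ⟨hmeet c₀, h⟩)
  set R : Finset (Fin P) := {i | ∃ c, (i, c) ∉ A}
  refine isMimMatching_of_mixed_rows A R ?_ fun i hi =>
    ⟨⟨c₀, hpure i⟩, (Finset.mem_filter.1 hi).2⟩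
  have hcover : Aᶜ ⊆ ↑(R ×ˢ mixedCols A) := fun x hx => by
    simp only [Finset.coe_product, Set.mem_prod, Finset.mem_coe, mem_mixedCols]
    exact ⟨by simpa [R] using ⟨x.2, hx⟩, hmeet x.2, x.1, hx⟩
  have hcount : Aᶜ.ncard ≤ R.card * (mixedCols A).card := by
    simpa [Set.ncard_coe_finset, Finset.card_product] using Set.ncard_le_ncard hcover
  by_contra! hR
  nlinarith

theorem isMimMatching_of_balanced (hP : 2 * k ≤ P) (hQ : 2 * k ≤ Q + 1)
    (hA : (2 * k) ^ 2 ≤ A.ncard) (hAc : (2 * k) ^ 2 ≤ Aᶜ.ncard) :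
    IsMimMatching (ccGrid P Q) A k := by
  by_cases hM : 2 * k ≤ (mixedCols A).card + 1
  · exact isMimMatching_of_mixed_cols A _ hM fun c => mem_mixedCols.1
  push Not at hM
  by_cases hout : ∃ c, ∀ r, (r, c) ∉ A
  · by_cases hin : ∃ c, ∀ r, (r, c) ∈ A
    · obtain ⟨⟨c, hc⟩, ⟨c', hc'⟩⟩ := And.intro hin hout
      refine isMimMatching_of_mixed_rows A Finset.univ ?_ fun i _ => ⟨⟨c, hc i⟩, ⟨c', hc' i⟩⟩
      simpa using hP
    · push Not at hin
      simpa using (isMimMatching_of_forall_col_meets (A := Aᶜ) hQ (by simpa using hA) hin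
        (by simpa using hM)).compl
  · push Not at hout
    exact isMimMatching_of_forall_col_meets hQ hAc hout hM

end ccGrid

namespace SimpleGraph
variable {β : Type*} {T : SimpleGraph β} {x y z u : β}

lemma Reachable.deleteEdges_or (h : T.Reachable u x) :
    (T.deleteEdges {s(x, y)}).Reachable u x ∨ (T.deleteEdges {s(x, y)}).Reachable u y := by
  obtain ⟨w⟩ := h
  induction w with
  | nil => exact .inl .rfl
  | @cons u a x hua _ ih =>
    by_cases he : s(u, a) = s(x, y)
    · rcases Sym2.eq_iff.1 he with ⟨rfl, -⟩ | ⟨rfl, -⟩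
      · exact .inl .rfl
      · exact .inr .rfl
    · have hadj : (T.deleteEdges {s(x, y)}).Adj u a := by simpa [hua] using he
      exact ih.imp hadj.reachable.trans hadj.reachable.trans

lemma IsAcyclic.not_reachable_deleteEdges (hT : T.IsAcyclic) (h : T.Adj x y) :
    ¬ (T.deleteEdges {s(x, y)}).Reachable x y :=
  isAcyclic_iff_forall_adj_isBridge.1 hT h

lemma Walk.exists_adj_reachable_deleteEdges (w : T.Walk u y) (hu : u ≠ y) :
    ∃ z, T.Adj z y ∧ (T.deleteEdges {s(z, y)}).Reachable u z := by
  induction w with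
  | nil => exact absurd rfl hu
  | @cons u a y hua _ ih =>
    by_cases ha : a = y
    · subst ha
      exact ⟨u, hua, .rfl⟩
    · obtain ⟨z, hzy, hz⟩ := ih ha
      have hadj : (T.deleteEdges {s(z, y)}).Adj u a := by
        simp only [deleteEdges_adj, Set.mem_singleton_iff, Sym2.eq_iff, hua, true_and]
        tauto
      exact ⟨z, hzy, hadj.reachable.trans hz⟩

lemma IsAcyclic.reachable_deleteEdges_of_reachable_deleteEdges (hT : T.IsAcyclic)
    (hyz : T.Adj y z) (hzx : z ≠ x) {b : β}
    (h : (T.deleteEdges {s(y, z)}).Reachable b z) : (T.deleteEdges {s(x, y)}).Reachable b y := by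
  obtain ⟨w, hw⟩ := reachable_deleteEdges_iff_exists_walk.1 h
  induction w with
  | nil =>
    refine Adj.reachable ?_
    simp only [deleteEdges_adj, Set.mem_singleton_iff, Sym2.eq_iff, hyz.symm, true_and]
    rintro (⟨h, -⟩ | ⟨h, -⟩)
    exacts [hzx h, hyz.ne h.symm]
  | @cons b a z hba w ih =>
    rw [Walk.edges_cons, List.mem_cons, not_or] at hw
    by_cases he : s(b, a) = s(x, y)
    · rcases Sym2.eq_iff.1 he with ⟨rfl, rfl⟩ | ⟨rfl, -⟩
      · exact absurd (reachable_deleteEdges_iff_exists_walk.2 ⟨w, hw.2⟩)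
          (hT.not_reachable_deleteEdges hyz)
      · exact .rfl
    · have hadj : (T.deleteEdges {s(x, y)}).Adj b a := by simpa [hba] using he
      exact hadj.reachable.trans (ih hyz hzx
        (reachable_deleteEdges_iff_exists_walk.2 ⟨w, hw.2⟩) hw.2)

lemma IsAcyclic.setOf_reachable_deleteEdges_ssubset (hT : T.IsAcyclic) (hyz : T.Adj y z)
    (hzx : z ≠ x) :
    {b | (T.deleteEdges {s(y, z)}).Reachable b z} ⊂
      {b | (T.deleteEdges {s(x, y)}).Reachable b y} :=
  ⟨fun _ => hT.reachable_deleteEdges_of_reachable_deleteEdges hyz hzx,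
    fun h => hT.not_reachable_deleteEdges hyz (h (Reachable.rfl : _))⟩

end SimpleGraph

namespace BranchDecomp
variable {V : Type} [Fintype V] (D : BranchDecomp V) {x y : D.β}

lemma cut_swap (x y : D.β) :
    D.cut y x = {v | (D.T.deleteEdges {s(x, y)}).Reachable (D.L v) y} := by
  simp only [cut, Sym2.eq_swap]

lemma cut_swap_eq_compl (hxy : D.T.Adj x y) : D.cut y x = (D.cut x y)ᶜ := by
  ext v
  rw [cut_swap, Set.mem_compl_iff]
  refine ⟨fun hy hx => D.acyclic.not_reachable_deleteEdges hxy (hx.symm.trans hy), fun hx => ?_⟩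
  exact ((D.connected (D.L v) x).deleteEdges_or).resolve_left hx

lemma ncard_cut_add_ncard_cut (hxy : D.T.Adj x y) :
    (D.cut x y).ncard + (D.cut y x).ncard = Fintype.card V := by
  rw [D.cut_swap_eq_compl hxy, Set.ncard_add_ncard_compl, Nat.card_eq_fintype_card]

lemma cut_swap_subset (x y : D.β) :
    D.cut y x ⊆ {v | D.L v = y} ∪ ⋃ z ∈ D.T.neighborSet y \ {x}, D.cut z y := by
  intro v hv
  rw [cut_swap] at hv
  by_cases hvy : D.L v = y
  · exact .inl hvy
  obtain ⟨w⟩ := hv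
  obtain ⟨z, hzy, hz⟩ := w.exists_adj_reachable_deleteEdges hvy
  obtain ⟨hzy, hzx⟩ := deleteEdges_adj.1 hzy
  refine .inr (Set.mem_biUnion (x := z) ⟨hzy.symm, fun h => hzx ?_⟩ ?_)
  · rw [Set.mem_singleton_iff.1 h]; rfl
  · exact hz.mono (deleteEdges_mono (deleteEdges_le _))

lemma ncard_setOf_L_eq_le_one (y : D.β) : {v | D.L v = y}.ncard ≤ 1 :=
  (Set.ncard_le_one (Set.toFinite _)).2 fun _ ha _ hb => D.inj (ha.trans hb.symm)

lemma exists_adj_le_ncard_cut (hxy : D.T.Adj x y) {t : ℕ} (ht : 0 < t)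
    (hcut : 2 * t ≤ (D.cut y x).ncard) : ∃ z, D.T.Adj y z ∧ z ≠ x ∧ t ≤ (D.cut z y).ncard := by
  have := D.finβ
  by_contra! hsmall
  have hsub := (Set.ncard_le_ncard (D.cut_swap_subset x y)).trans (Set.ncard_union_le _ _)
  have hL := D.ncard_setOf_L_eq_le_one y
  have hdeg := Set.ncard_sdiff_singleton_of_mem (s := D.T.neighborSet y) hxy.symm
  rcases D.subcubic y with h | h
  · rw [h] at hdeg
    rw [(Set.ncard_eq_zero (Set.toFinite _)).1 hdeg, Set.biUnion_empty, Set.ncard_empty] at hsub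
    omega
  · obtain ⟨z₁, z₂, -, hN⟩ := Set.ncard_eq_two.1 (hdeg.trans (by rw [h]))
    have hmem : ∀ z ∈ D.T.neighborSet y \ {x}, (D.cut z y).ncard < t := fun z hz =>
      hsmall z hz.1 fun h => hz.2 h
    rw [hN, Set.biUnion_pair] at hsub
    rw [hN] at hmem
    have h₁ := hmem z₁ (by simp)
    have h₂ := hmem z₂ (by simp)
    have := Set.ncard_union_le (D.cut z₁ y) (D.cut z₂ y)
    omega

theorem exists_balanced_edge {t : ℕ} (ht : 0 < t) (hV : 3 * t ≤ Fintype.card V) :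
    ∃ x y, D.T.Adj x y ∧ t ≤ (D.cut x y).ncard ∧ t ≤ (D.cut y x).ncard := by
  have := D.finβ
  by_contra! hno
  have step : ∀ x y, D.T.Adj x y → (D.cut x y).ncard < t →
      ∃ z, D.T.Adj y z ∧ z ≠ x ∧ (D.cut y z).ncard < t := fun x y hxy hs => by
    have := D.ncard_cut_add_ncard_cut hxy
    have hcut : 2 * t ≤ (D.cut y x).ncard := by omega
    obtain ⟨z, hyz, hzx, hz⟩ := D.exists_adj_le_ncard_cut hxy ht hcut
    exact ⟨z, hyz, hzx, hno z y hyz.symm hz⟩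
  -- Walking along small sides strictly shrinks the part of the tree ahead.
  have descent : ∀ n x y, D.T.Adj x y → (D.cut x y).ncard < t →
      {b | (D.T.deleteEdges {s(x, y)}).Reachable b y}.ncard ≤ n → False := by
    intro n
    induction n with
    | zero =>
      intro x y _ _ hn
      have hy : y ∈ {b | (D.T.deleteEdges {s(x, y)}).Reachable b y} := Reachable.rfl
      have := (Set.ncard_pos (Set.toFinite _)).2 ⟨y, hy⟩
      omega
    | succ n ih =>
      intro x y hxy hs hn
      obtain ⟨z, hyz, hzx, hz⟩ := step x y hxy hs
      have := Set.ncard_lt_ncard (D.acyclic.setOf_reachable_deleteEdges_ssubset hyz hzx)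
      exact ih y z hyz hz (by omega)
  obtain ⟨v₁, v₂, hv⟩ := Fintype.exists_pair_of_one_lt_card (by omega : 1 < Fintype.card V)
  obtain ⟨w⟩ := D.connected (D.L v₁) (D.L v₂)
  have hxy := w.adj_snd (Walk.not_nil_of_ne (D.inj.ne hv))
  by_cases hs : (D.cut (D.L v₁) w.snd).ncard < t
  · exact descent _ _ _ hxy hs le_rfl
  · exact descent _ _ _ hxy.symm (hno _ _ hxy (not_lt.1 hs)) le_rfl

end BranchDecomp

/-- Vertex `x ≠ 0` is joined to `x / 2`: the binary heap rooted at `1`, with `0` as an extra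
leaf on the root, so that no vertex has degree `2`. -/
def heapTree (N : ℕ) : SimpleGraph (Fin N) :=
  SimpleGraph.fromRel fun x y => (y : ℕ) = x / 2

namespace heapTree
variable {N : ℕ}

lemma adj_iff {x y : Fin N} :
    (heapTree N).Adj x y ↔ (x : ℕ) ≠ 0 ∧ (y : ℕ) = x / 2 ∨ (y : ℕ) ≠ 0 ∧ (x : ℕ) = y / 2 := by
  simp only [heapTree, fromRel_adj, ne_eq, Fin.ext_iff]
  omega

lemma reachable_zero (x : Fin N) : (heapTree N).Reachable x ⟨0, x.pos⟩ := by
  obtain ⟨n, hn⟩ := x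
  induction n using Nat.strong_induction_on with
  | _ n ih =>
    rcases n.eq_zero_or_pos with rfl | hpos
    · rfl
    have hadj : (heapTree N).Adj ⟨n, hn⟩ ⟨n / 2, by omega⟩ := adj_iff.2 (.inl ⟨hpos.ne', rfl⟩)
    exact hadj.reachable.trans (ih _ (by omega) _)

lemma connected (hN : 0 < N) : (heapTree N).Connected :=
  (connected_iff _).2 ⟨fun x y => (reachable_zero x).trans (reachable_zero y).symm, ⟨⟨0, hN⟩⟩⟩

lemma card_edgeSet_succ (n : ℕ) : Nat.card (heapTree (n + 1)).edgeSet = n := by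
  have hf : Function.Bijective fun i : Fin n => (⟨s(i.succ, ⟨(i + 1) / 2, by omega⟩),
      adj_iff.2 (.inl ⟨by simp, by simp⟩)⟩ : (heapTree (n + 1)).edgeSet) := by
    refine ⟨fun i j h => ?_, ?_⟩
    · replace h := congrArg Subtype.val h
      simp only [Sym2.eq_iff, Fin.ext_iff, Fin.val_succ] at h
      exact Fin.ext (by omega)
    · rintro ⟨e, he⟩
      induction e using Sym2.ind with
      | _ a b =>
      rw [mem_edgeSet, adj_iff] at he
      rcases he with ⟨ha, hb⟩ | ⟨hb, ha⟩
      · refine ⟨⟨a - 1, by omega⟩, Subtype.ext ?_⟩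
        simp only [Sym2.eq_iff, Fin.ext_iff, Fin.val_succ]
        omega
      · refine ⟨⟨b - 1, by omega⟩, Subtype.ext ?_⟩
        simp only [Sym2.eq_iff, Fin.ext_iff, Fin.val_succ]
        omega
  rw [← Nat.card_eq_of_bijective _ hf, Nat.card_eq_fintype_card, Fintype.card_fin]

lemma isTree (hN : 0 < N) : (heapTree N).IsTree := by
  obtain ⟨n, rfl⟩ := Nat.exists_eq_add_one.2 hN
  exact isTree_iff_connected_and_card.2
    ⟨connected hN, by rw [card_edgeSet_succ, Nat.card_eq_fintype_card, Fintype.card_fin]⟩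

variable {m : ℕ}

lemma ncard_neighborSet (hm : 2 ≤ m) (z : Fin (2 * m)) :
    ((heapTree (2 * m)).neighborSet z).ncard = if (z : ℕ) = 0 ∨ m ≤ z then 1 else 3 := by
  split_ifs with hz
  · rw [Set.ncard_eq_one]
    refine ⟨⟨if (z : ℕ) = 0 then 1 else z / 2, by split_ifs <;> omega⟩, ?_⟩
    ext w
    simp only [mem_neighborSet, adj_iff, Set.mem_singleton_iff, Fin.ext_iff]
    split_ifs <;> omega
  · rw [Set.ncard_eq_three]
    refine ⟨⟨z / 2, by omega⟩, ⟨2 * z, by omega⟩, ⟨2 * z + 1, by omega⟩,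
      by simp [Fin.ext_iff]; omega, by simp [Fin.ext_iff]; omega, by simp [Fin.ext_iff], ?_⟩
    ext w
    simp only [mem_neighborSet, adj_iff, Set.mem_insert_iff, Set.mem_singleton_iff, Fin.ext_iff]
    omega

end heapTree

namespace BranchDecomp
variable {V : Type} [Fintype V]

theorem nonempty_of_three_le_card (hV : 3 ≤ Fintype.card V) : Nonempty (BranchDecomp V) := by
  set m := Fintype.card V - 1 with hm
  let e := Fintype.equivFin V
  have hm2 : 2 ≤ m := by omega
  let L : V → Fin (2 * m) := fun v => ⟨if (e v : ℕ) = m then 0 else m + e v, by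
    have := (e v).2
    split_ifs <;> omega⟩
  refine ⟨{
    β := Fin (2 * m)
    finβ := inferInstance
    T := heapTree (2 * m)
    connected := heapTree.connected (by omega)
    acyclic := (heapTree.isTree (by omega)).isAcyclic
    subcubic := fun z => by
      rw [heapTree.ncard_neighborSet hm2]
      split_ifs <;> simp
    L := L
    inj := fun v w h => e.injective (Fin.ext ?_)
    leaves := fun z => ?_ }⟩
  · have := (e v).2
    have := (e w).2
    simp only [L, Fin.ext_iff] at h
    split_ifs at h <;> omega
  · rw [heapTree.ncard_neighborSet hm2]
    constructor
    · intro hz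
      have hz' : (z : ℕ) = 0 ∨ m ≤ z := by
        by_contra h
        rw [if_neg h] at hz
        omega
      have := z.2
      refine ⟨e.symm ⟨if (z : ℕ) = 0 then m else z - m, by split_ifs <;> omega⟩, Fin.ext ?_⟩
      simp only [L, Equiv.apply_symm_apply]
      split_ifs <;> omega
    · rintro ⟨v, rfl⟩
      have := (e v).2
      simp only [L]
      split_ifs <;> omega

end BranchDecomp

section Width
variable {V : Type} [Fintype V]

lemma IsMimMatching.le_card {G : SimpleGraph V} {A : Set V} {k : ℕ} (h : IsMimMatching G A k) :
    k ≤ Fintype.card V := by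
  obtain ⟨a, -, ha, -⟩ := h
  simpa using Fintype.card_le_of_injective a ha

lemma IsMimMatching.le_mimval {G : SimpleGraph V} {A : Set V} {k : ℕ}
    (h : IsMimMatching G A k) : k ≤ mimval G A :=
  le_csSup ⟨Fintype.card V, fun _ => IsMimMatching.le_card⟩ h

lemma mimval_le_card (G : SimpleGraph V) (A : Set V) : mimval G A ≤ Fintype.card V :=
  csSup_le' fun _ => IsMimMatching.le_card

lemma le_fWidth [Nonempty (BranchDecomp V)] {f : Set V → ℕ} {B k : ℕ} (hf : ∀ A, f A ≤ B)
    (h : ∀ D : BranchDecomp V, ∃ x y, D.T.Adj x y ∧ k ≤ f (D.cut x y)) : k ≤ fWidth f := by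
  refine le_csInf ⟨B, Classical.arbitrary _, fun _ _ _ => hf _⟩ ?_
  rintro w ⟨D, hD⟩
  obtain ⟨x, y, hxy, hk⟩ := h D
  exact hk.trans (hD x y hxy)

end Width

theorem ccGrid.le_mimw {P Q k : ℕ} (hP : 2 * k ≤ P) (hQ : 2 * k ≤ Q + 1)
    (hPQ : 3 * (2 * k) ^ 2 ≤ P * Q) : k ≤ mimw (ccGrid P Q) := by
  rcases k.eq_zero_or_pos with rfl | hk
  · exact Nat.zero_le _
  have hcard : 3 * (2 * k) ^ 2 ≤ Fintype.card (Fin P × Fin Q) := by simpa using hPQ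
  have := BranchDecomp.nonempty_of_three_le_card (hcard.trans' (by nlinarith))
  refine le_fWidth (mimval_le_card _) fun D => ?_
  obtain ⟨x, y, hxy, hA, hAc⟩ := D.exists_balanced_edge (by positivity) hcard
  rw [D.cut_swap_eq_compl hxy] at hAc
  exact ⟨x, y, hxy, (isMimMatching_of_balanced hP hQ hA hAc).le_mimval⟩

theorem stmt9_general (p : ℕ) :
    (∃ σ : Fin (12 * p ^ 2) ≃ Fin (4 * p) × Fin (3 * p),
        IsCoCompOrdering (ccGrid (4 * p) (3 * p)) σ) ∧
    Real.sqrt ((12 * p ^ 2 : ℝ) / 12) ≤ (mimw (ccGrid (4 * p) (3 * p)) : ℝ) := by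
  refine ⟨ccGrid.exists_isCoCompOrdering (by ring), ?_⟩
  rw [show (12 * p ^ 2 : ℝ) / 12 = (p : ℝ) ^ 2 by ring, Real.sqrt_sq p.cast_nonneg]
  exact_mod_cast ccGrid.le_mimw (by omega) (by omega) (le_of_eq (by ring))

/-- for `p ≥ 4`, the `(4p × 3p)` column-clique grid is a co-comparability
graph, and it is an `n = 12p²`-vertex co-comparability graph of mim-width at least
`√(n/12)`; hence co-comparability graphs have unbounded mim-width. -/
theorem stmt9 (p : ℕ) (hp : 4 ≤ p) :
    (∃ σ : Fin (12 * p ^ 2) ≃ Fin (4 * p) × Fin (3 * p),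
        IsCoCompOrdering (ccGrid (4 * p) (3 * p)) σ) ∧
    Real.sqrt ((12 * p ^ 2 : ℝ) / 12) ≤ (mimw (ccGrid (4 * p) (3 * p)) : ℝ) :=
  stmt9_general p
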